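/- arXiv:1705.10931 — 3 statements merged into one kernel-verified Lean document; each statement's English description precedes it below -/
import Mathlib

section
/- With the parameter values τ_R = −(σ_R+1), δ_L = (1−σ_Lσ_R²)/(σ_R(σ_R+1)), τ_L = 1/(σ_R²+1) − (σ_L+σ_R)/(σ_R+1), σ_R > 1, the 2×2 matrix C = [ω₁ᵀ; ω₂ᵀ] M_Y [ζ₁ ζ₂], where M_Y = A_R A_L and ω_j, ζ_j are the normalized left/right eigenvectors of M_X = A_R A_L A_R for eigenvalues σ_R + 1/σ_R and σ_R/(σ_R²+1), satisfies det(C) = 1/σ_R. -/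
/-!
The third row of `M_Y = A_R A_L` and the third coordinates of `ζ₁, ζ₂` vanish, so `C` factors
as `W B Z` through the top-left `2 × 2` block `B` of `M_Y`, with `W`, `Z` the truncated `ω`'s and
`ζ`'s. The normalisation of the `ω_j` makes `det W * det Z = 1`, and
`det B = σ_R σ_L - τ_R δ_L`, from which `τ_L` has cancelled; the choice of `δ_L` makes it `1 / σ_R`.
-/

open Matrix

theorem dotProduct_mulVec_eq_submatrix_castSucc {R : Type*} [CommSemiring R] {n : ℕ}
    (ω ζ : Fin (n + 1) → R) (M : Matrix (Fin (n + 1)) (Fin (n + 1)) R)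
    (hM : M (Fin.last n) = 0) (hζ : ζ (Fin.last n) = 0) :
    ω ⬝ᵥ (M *ᵥ ζ) =
      (ω ∘ Fin.castSucc) ⬝ᵥ (M.submatrix Fin.castSucc Fin.castSucc *ᵥ (ζ ∘ Fin.castSucc)) := by
  simp only [dotProduct, mulVec, Fin.sum_univ_castSucc, hM, hζ, Pi.zero_apply, zero_mul,
    mul_zero, Finset.sum_const_zero, add_zero, Function.comp_apply, submatrix_apply]

theorem det_fin_two_dotProduct_mulVec {R : Type*} [CommRing R] (u₁ u₂ v₁ v₂ : Fin 2 → R)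
    (B : Matrix (Fin 2) (Fin 2) R) :
    (!![u₁ ⬝ᵥ (B *ᵥ v₁), u₁ ⬝ᵥ (B *ᵥ v₂); u₂ ⬝ᵥ (B *ᵥ v₁), u₂ ⬝ᵥ (B *ᵥ v₂)]).det =
      (of ![u₁, u₂]).det * B.det * (of ![v₁, v₂]).det := by
  simp only [det_fin_two, dotProduct, mulVec, Fin.sum_univ_two, of_apply,
    cons_val_zero, cons_val_one]
  ring

theorem det_submatrix_castSucc_companion_mul {R : Type*} [CommRing R] (τ σ τ' σ' δ' : R) :
    ((!![τ, 1, 0; -σ, 0, 1; 0, 0, 0] * !![τ', 1, 0; -σ', 0, 1; δ', 0, 0]).submatrix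
      Fin.castSucc Fin.castSucc).det = σ * σ' - τ * δ' := by
  rw [det_fin_two]
  simp only [submatrix_apply, Fin.castSucc_zero, Fin.castSucc_one, mul_apply, Fin.sum_univ_three,
    of_apply, cons_val', cons_val_zero, cons_val_one, cons_val_two, cons_val_fin_one,
    tail_cons, vecHead]
  ring

theorem detC_eq_inv_sigmaR (σL σR : ℝ) (hσR : σR > 1) :
    let τR : ℝ := -(σR + 1)
    let δL : ℝ := (1 - σL * σR ^ 2) / (σR * (σR + 1))
    let τL : ℝ := 1 / (σR ^ 2 + 1) - (σL + σR) / (σR + 1)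
    let AL : Matrix (Fin 3) (Fin 3) ℝ := !![τL, 1, 0; -σL, 0, 1; δL, 0, 0]
    let AR : Matrix (Fin 3) (Fin 3) ℝ := !![τR, 1, 0; -σR, 0, 1; 0, 0, 0]
    let MY : Matrix (Fin 3) (Fin 3) ℝ := AR * AL
    let ω₁ : Fin 3 → ℝ := (1 / (σR ^ 2 - σR + 1)) • ![1, σR - 1, -σR]
    let ω₂ : Fin 3 → ℝ :=
      (1 / (σR ^ 2 - σR + 1)) • ![-(σR - 1), σR, -(σR + 1 / σR)]
    let ζ₁ : Fin 3 → ℝ := ![σR, σR - 1, 0]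
    let ζ₂ : Fin 3 → ℝ := ![-(σR - 1), 1, 0]
    let C : Matrix (Fin 2) (Fin 2) ℝ :=
      !![ω₁ ⬝ᵥ (MY *ᵥ ζ₁), ω₁ ⬝ᵥ (MY *ᵥ ζ₂);
         ω₂ ⬝ᵥ (MY *ᵥ ζ₁), ω₂ ⬝ᵥ (MY *ᵥ ζ₂)]
    C.det = 1 / σR := by
  intro τR δL τL AL AR MY ω₁ ω₂ ζ₁ ζ₂ C
  have hs : σR ≠ 0 := by positivity
  have hs1 : σR + 1 ≠ 0 := by positivity
  have hk : 1 / (σR ^ 2 - σR + 1) * (σR ^ 2 - σR + 1) = 1 :=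
    one_div_mul_cancel (by nlinarith)
  have hMY : MY (Fin.last 2) = 0 := by
    ext j; simp [MY, AR, vecMul, dotProduct, Fin.sum_univ_three]
  have hdetB : (MY.submatrix Fin.castSucc Fin.castSucc).det = 1 / σR := by
    rw [det_submatrix_castSucc_companion_mul]
    simp only [τR, δL]
    field_simp
    ring
  have hdetW : (of ![ω₁ ∘ Fin.castSucc, ω₂ ∘ Fin.castSucc]).det = 1 / (σR ^ 2 - σR + 1) := by
    rw [det_fin_two]
    simp only [ω₁, ω₂, of_apply, Function.comp_apply, Pi.smul_apply, smul_eq_mul, cons_val_zero,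
      cons_val_one, Fin.castSucc_zero, Fin.castSucc_one]
    linear_combination (1 / (σR ^ 2 - σR + 1)) * hk
  have hdetZ : (of ![ζ₁ ∘ Fin.castSucc, ζ₂ ∘ Fin.castSucc]).det = σR ^ 2 - σR + 1 := by
    rw [det_fin_two]
    simp only [ζ₁, ζ₂, of_apply, Function.comp_apply, cons_val_zero, cons_val_one,
      Fin.castSucc_zero, Fin.castSucc_one]
    ring
  simp only [C, dotProduct_mulVec_eq_submatrix_castSucc _ _ MY hMY (rfl : ζ₁ (Fin.last 2) = 0),
    dotProduct_mulVec_eq_submatrix_castSucc _ _ MY hMY (rfl : ζ₂ (Fin.last 2) = 0),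
    det_fin_two_dotProduct_mulVec, hdetW, hdetB, hdetZ]
  linear_combination (1 / σR) * hk
end

section
/- With A_L, A_R the border-collision normal form matrices with τ_R = −(σ_R+1), δ_R = 0, δ_L = (1−σ_Lσ_R²)/(σ_R(σ_R+1)), τ_L = 1/(σ_R²+1) − (σ_L+σ_R)/(σ_R+1), and σ_R > 1, the fixed point x₀ of x ↦ A_R A_L A_R x + (I + A_R + A_R A_L)e₁ is x₀ = (1/(σ_R²−σ_R+1))·(σ_R², −1, 0)ᵀ, and x₁ = A_R x₀ + e₁ = (1/(σ_R²−σ_R+1))·(−σ_R(σ_R²+1), −σ_R³, 0)ᵀ. -/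
/-!
The point `x₀` starts a period-three orbit `x₀ ↦ x₁ = f_R x₀ ↦ x₂ = f_L x₁ ↦ f_R x₂ = x₀`;
each of the three steps is a direct computation, in the last of which the `σ_L`-terms cancel.
Expanding the affine composition, `f_R (f_L (f_R x)) = A_R A_L A_R x + (I + A_R + A_R A_L) e₁`,
so `x₀` is the stated fixed point.
-/

open Matrix

theorem Matrix.mulVec_affine_comp_three {n R : Type*} [Fintype n] [DecidableEq n] [Semiring R]
    (A B : Matrix n n R) (e x : n → R) :
    A *ᵥ (B *ᵥ (A *ᵥ x + e) + e) + e = (A * B * A) *ᵥ x + (1 + A + A * B) *ᵥ e := by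
  simp only [mulVec_add, add_mulVec, mulVec_mulVec, one_mulVec, Matrix.mul_assoc]
  abel

def normalFormMatrix {R : Type*} [Ring R] (τ σ δ : R) : Matrix (Fin 3) (Fin 3) R :=
  !![τ, 1, 0; -σ, 0, 1; δ, 0, 0]

theorem normalFormMatrix_mulVec {R : Type*} [Ring R] (τ σ δ : R) (x : Fin 3 → R) :
    normalFormMatrix τ σ δ *ᵥ x = ![τ * x 0 + x 1, -σ * x 0 + x 2, δ * x 0] := by
  ext i
  fin_cases i <;> simp [normalFormMatrix, mulVec, dotProduct, Fin.sum_univ_three]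

namespace XCycle

variable (σL σR : ℝ)

noncomputable def leftMatrix : Matrix (Fin 3) (Fin 3) ℝ :=
  normalFormMatrix (1 / (σR ^ 2 + 1) - (σL + σR) / (σR + 1)) σL
    ((1 - σL * σR ^ 2) / (σR * (σR + 1)))

def rightMatrix : Matrix (Fin 3) (Fin 3) ℝ := normalFormMatrix (-(σR + 1)) σR 0

noncomputable def point₀ : Fin 3 → ℝ := (1 / (σR ^ 2 - σR + 1)) • ![σR ^ 2, -1, 0]

noncomputable def point₁ : Fin 3 → ℝ :=
  (1 / (σR ^ 2 - σR + 1)) • ![-(σR * (σR ^ 2 + 1)), -σR ^ 3, 0]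

noncomputable def point₂ : Fin 3 → ℝ :=
  (1 / ((σR + 1) * (σR ^ 2 - σR + 1))) •
    ![σL * σR * (σR ^ 2 + 1) - σR + 1, σL * σR * (σR + 1) * (σR ^ 2 + 1),
      (σL * σR ^ 2 - 1) * (σR ^ 2 + 1)]

/-- `σ_R² - σ_R + 1` in the form to which `field_simp` normalises it. -/
theorem mul_sub_one_add_one_ne_zero : σR * (σR - 1) + 1 ≠ 0 := by
  nlinarith [sq_nonneg (σR - 1)]

theorem rightMatrix_mulVec_point₀_add :
    rightMatrix σR *ᵥ point₀ σR + ![1, 0, 0] = point₁ σR := by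
  have hD := mul_sub_one_add_one_ne_zero σR
  rw [rightMatrix, normalFormMatrix_mulVec]
  ext i
  fin_cases i <;> simp [point₀, point₁] <;> field_simp
  ring

theorem leftMatrix_mulVec_point₁_add (h₀ : σR ≠ 0) (h₁ : σR + 1 ≠ 0) :
    leftMatrix σL σR *ᵥ point₁ σR + ![1, 0, 0] = point₂ σL σR := by
  have hD := mul_sub_one_add_one_ne_zero σR
  rw [leftMatrix, normalFormMatrix_mulVec]
  ext i
  fin_cases i <;> simp [point₁, point₂] <;> field_simp <;> ring

theorem rightMatrix_mulVec_point₂_add (h₁ : σR + 1 ≠ 0) :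
    rightMatrix σR *ᵥ point₂ σL σR + ![1, 0, 0] = point₀ σR := by
  have hD := mul_sub_one_add_one_ne_zero σR
  rw [rightMatrix, normalFormMatrix_mulVec]
  ext i
  fin_cases i <;> simp [point₀, point₂] <;> field_simp <;> ring

end XCycle

theorem X_cycle_points (σL σR : ℝ) (hσR : σR > 1) :
    let τR : ℝ := -(σR + 1)
    let δL : ℝ := (1 - σL * σR ^ 2) / (σR * (σR + 1))
    let τL : ℝ := 1 / (σR ^ 2 + 1) - (σL + σR) / (σR + 1)
    let AL : Matrix (Fin 3) (Fin 3) ℝ := !![τL, 1, 0; -σL, 0, 1; δL, 0, 0]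
    let AR : Matrix (Fin 3) (Fin 3) ℝ := !![τR, 1, 0; -σR, 0, 1; 0, 0, 0]
    let e₁ : Fin 3 → ℝ := ![1, 0, 0]
    let x₀ : Fin 3 → ℝ := (1 / (σR ^ 2 - σR + 1)) • ![σR ^ 2, -1, 0]
    let x₁ : Fin 3 → ℝ :=
      (1 / (σR ^ 2 - σR + 1)) • ![-(σR * (σR ^ 2 + 1)), -σR ^ 3, 0]
    x₀ = (AR * AL * AR) *ᵥ x₀ + ((1 : Matrix (Fin 3) (Fin 3) ℝ) + AR + AR * AL) *ᵥ e₁ ∧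
      x₁ = AR *ᵥ x₀ + e₁ := by
  intro τR δL τL AL AR e₁ x₀ x₁
  have h₀ : σR ≠ 0 := by positivity
  have h₁ : σR + 1 ≠ 0 := by positivity
  have hx₁ : AR *ᵥ x₀ + e₁ = x₁ := XCycle.rightMatrix_mulVec_point₀_add σR
  have hx₂ : AL *ᵥ x₁ + e₁ = XCycle.point₂ σL σR :=
    XCycle.leftMatrix_mulVec_point₁_add σL σR h₀ h₁
  have hx₀ : AR *ᵥ XCycle.point₂ σL σR + e₁ = x₀ :=
    XCycle.rightMatrix_mulVec_point₂_add σL σR h₁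
  refine ⟨?_, hx₁.symm⟩
  rw [← mulVec_affine_comp_three, hx₁, hx₂, hx₀]
end

section
/- The first component of X_p(t) (the periodic solution of the forced linear system) attains maximum value γ/√((α₁−α₃)²+(α₂−1)²) − 1 over t ∈ ℝ; in particular, the maximum of the first component equals 0 exactly when γ = √((α₁−α₃)²+(α₂−1)²). -/
/-! The first component is `γ / S · (a cos t + b sin t) - 1` with `a = α₁ - α₃`, `b = α₂ - 1`,
`S = a² + b²`. The harmonic `a cos t + b sin t` has maximum `√S`, reached at the argument of
`a + b i`; since `γ / S ≥ 0`, the maximum of the first component is `γ / S · √S - 1 = γ / √S - 1`. -/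

open Real Set

theorem mul_cos_add_mul_sin_le_sqrt (a b t : ℝ) : a * cos t + b * sin t ≤ √(a ^ 2 + b ^ 2) :=
  Real.le_sqrt_of_sq_le <| by
    nlinarith [sq_nonneg (a * sin t - b * cos t), sin_sq_add_cos_sq t]

theorem mul_cos_arg_add_mul_sin_arg (a b : ℝ) :
    a * cos (Complex.arg (a + b * Complex.I)) + b * sin (Complex.arg (a + b * Complex.I)) =
      √(a ^ 2 + b ^ 2) := by
  set z : ℂ := a + b * Complex.I
  have hr : √(a ^ 2 + b ^ 2) = ‖z‖ := (Complex.norm_add_mul_I a b).symm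
  have ha : a = ‖z‖ * cos z.arg := by simp [Complex.norm_mul_cos_arg, z]
  have hb : b = ‖z‖ * sin z.arg := by simp [Complex.norm_mul_sin_arg, z]
  rw [hr]
  linear_combination cos z.arg * ha + sin z.arg * hb + ‖z‖ * sin_sq_add_cos_sq z.arg

theorem isGreatest_range_mul_cos_add_mul_sin (a b : ℝ) :
    IsGreatest (range fun t => a * cos t + b * sin t) √(a ^ 2 + b ^ 2) :=
  ⟨⟨_, mul_cos_arg_add_mul_sin_arg a b⟩, by
    rintro _ ⟨t, rfl⟩
    exact mul_cos_add_mul_sin_le_sqrt a b t⟩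

theorem div_mul_sqrt_self (γ S : ℝ) : γ / S * √S = γ / √S := by
  rcases (sqrt_nonneg S).eq_or_lt with h0 | hpos
  · simp [← h0]
  · have hS : S = √S * √S := by rw [mul_self_sqrt (sqrt_pos.mp hpos).le]
    rw [hS, sqrt_mul_self hpos.le]
    field_simp

theorem grazing_condition_general (α₁ α₂ α₃ γ : ℝ)
    (hγ : γ > 0) :
    let Xp : ℝ → Fin 3 → ℝ := fun t =>
      (γ / ((α₁ - α₃) ^ 2 + (α₂ - 1) ^ 2)) •
          (Real.cos t • ![α₁ - α₃, α₂ - 1, -(α₁ - α₃)] +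
            Real.sin t • ![α₂ - 1, -(α₁ - α₃), -(α₂ - 1)]) -
        ![1, 0, 0]
    IsGreatest (Set.range fun t => Xp t 0)
        (γ / Real.sqrt ((α₁ - α₃) ^ 2 + (α₂ - 1) ^ 2) - 1) ∧
      (γ / Real.sqrt ((α₁ - α₃) ^ 2 + (α₂ - 1) ^ 2) - 1 = 0 ↔
        γ = Real.sqrt ((α₁ - α₃) ^ 2 + (α₂ - 1) ^ 2)) := by
  intro Xp
  set a := α₁ - α₃
  set b := α₂ - 1
  set S := a ^ 2 + b ^ 2
  let affine : ℝ → ℝ := fun x => γ / S * x - 1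
  have hmono : Monotone affine := fun x y hxy => by
    have : 0 ≤ γ / S := div_nonneg hγ.le (by positivity)
    dsimp only [affine]
    gcongr
  have hXp : (fun t => Xp t 0) = affine ∘ fun t => a * cos t + b * sin t := by
    funext t
    simp only [Xp, affine, Function.comp, Pi.sub_apply, Pi.smul_apply, Pi.add_apply,
      Matrix.cons_val_zero, smul_eq_mul]
    ring
  refine ⟨?_, ?_⟩
  · rw [hXp, range_comp, ← div_mul_sqrt_self]
    exact hmono.map_isGreatest (isGreatest_range_mul_cos_add_mul_sin a b)
  · rw [sub_eq_zero]
    by_cases hS : √S = 0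
    · simp [hS, hγ.ne']
    · exact div_eq_one_iff_eq hS

theorem grazing_condition (α₁ α₂ α₃ γ : ℝ)
    (h : (α₁ - α₃) ^ 2 + (α₂ - 1) ^ 2 ≠ 0) (hγ : γ > 0) :
    let Xp : ℝ → Fin 3 → ℝ := fun t =>
      (γ / ((α₁ - α₃) ^ 2 + (α₂ - 1) ^ 2)) •
          (Real.cos t • ![α₁ - α₃, α₂ - 1, -(α₁ - α₃)] +
            Real.sin t • ![α₂ - 1, -(α₁ - α₃), -(α₂ - 1)]) -
        ![1, 0, 0]
    IsGreatest (Set.range fun t => Xp t 0)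
        (γ / Real.sqrt ((α₁ - α₃) ^ 2 + (α₂ - 1) ^ 2) - 1) ∧
      (γ / Real.sqrt ((α₁ - α₃) ^ 2 + (α₂ - 1) ^ 2) - 1 = 0 ↔
        γ = Real.sqrt ((α₁ - α₃) ^ 2 + (α₂ - 1) ^ 2)) :=
  grazing_condition_general α₁ α₂ α₃ γ hγ
end
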